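/- Let (X,Y) be a bivariate standard Gaussian vector with correlation ρ(n) ∈ (−1,1) satisfying (1−ρ(n))·ln n → λ² ∈ [0,∞), and let u_n(s) = a_n s + b_n with the classical Gaussian normalizing constants. Then for all fixed x₁, y₂ ∈ ℝ, n·P(X > u_n(x₁), Y ≤ −u_n(y₂)) → 0 as n → ∞. -/
import Mathlib


open Real Filter MeasureTheory

noncomputable def aseq (n : ℕ) : ℝ := 1 / Real.sqrt (2 * Real.log n)

noncomputable def bseq (n : ℕ) : ℝ :=
  Real.sqrt (2 * Real.log n) -
    Real.log (4 * Real.pi * Real.log n) / (2 * Real.sqrt (2 * Real.log n))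

noncomputable def useq (n : ℕ) (s : ℝ) : ℝ := aseq n * s + bseq n

/-- Density of a centered bivariate Gaussian vector with unit variances and
correlation `r`. -/
noncomputable def biGaussDensity (r x y : ℝ) : ℝ :=
  (1 / (2 * Real.pi * Real.sqrt (1 - r ^ 2))) *
    Real.exp (-(x ^ 2 - 2 * r * x * y + y ^ 2) / (2 * (1 - r ^ 2)))

lemma biGauss_nonneg (r x y : ℝ) : 0 ≤ biGaussDensity r x y := by
  unfold biGaussDensity
  have h1 : 0 ≤ 1 / (2 * Real.pi * Real.sqrt (1 - r ^ 2)) :=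
    div_nonneg zero_le_one
      (mul_nonneg (by positivity) (Real.sqrt_nonneg _))
  exact mul_nonneg h1 (Real.exp_nonneg _)

lemma log_le_two_sqrt {y : ℝ} (hy : 0 < y) : Real.log y ≤ 2 * Real.sqrt y := by
  have h1 : Real.log (Real.sqrt y) ≤ Real.sqrt y - 1 :=
    Real.log_le_sub_one_of_pos (Real.sqrt_pos.mpr hy)
  rw [Real.log_sqrt hy.le] at h1
  nlinarith [Real.sqrt_nonneg y]

lemma aux_sup {t c : ℝ} (ht : 0 < t) (ht1 : t ≤ 1) (hc : 1 ≤ c) :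
    (Real.sqrt t)⁻¹ * Real.exp (-(c / t)) ≤ Real.exp (-c) := by
  have hs1 : 1 ≤ 1 / t := by rw [le_div_iff₀ ht]; linarith
  have h1 : Real.sqrt (1 / t) ≤ 1 / t := by
    calc Real.sqrt (1 / t) ≤ Real.sqrt ((1 / t) ^ 2) :=
          Real.sqrt_le_sqrt (by nlinarith)
      _ = 1 / t := Real.sqrt_sq (by positivity)
  have h2 : 1 / t ≤ Real.exp (1 / t - 1) := by
    have := Real.add_one_le_exp (1 / t - 1); linarith
  have h3 : Real.exp (1 / t - 1) ≤ Real.exp (c * (1 / t - 1)) := by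
    apply Real.exp_le_exp.mpr
    nlinarith
  have h4 : (Real.sqrt t)⁻¹ = Real.sqrt (1 / t) := by
    rw [one_div, Real.sqrt_inv]
  rw [h4]
  calc Real.sqrt (1 / t) * Real.exp (-(c / t))
      ≤ Real.exp (c * (1 / t - 1)) * Real.exp (-(c / t)) := by
        apply mul_le_mul_of_nonneg_right _ (Real.exp_nonneg _)
        exact le_trans h1 (le_trans h2 h3)
    _ = Real.exp (-c) := by
        rw [← Real.exp_add]
        congr 1
        field_simp
        ring

lemma integral_bound (r u u' : ℝ) (hr : 1 / 2 ≤ r) (hr1 : r < 1) (hS : 0 ≤ u + u') :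
    (∫ x in Set.Ioi u, ∫ y in Set.Iic (-u'), biGaussDensity r x y) ≤
      2 * (Real.sqrt (1 - r ^ 2))⁻¹ *
        Real.exp (-(r * (u + u') ^ 2 / (2 * (1 - r ^ 2)))) := by
  have ht : 0 < 1 - r ^ 2 := by nlinarith
  have hst : 0 < Real.sqrt (1 - r ^ 2) := Real.sqrt_pos.mpr ht
  set E := Real.exp (-(r * (u + u') ^ 2 / (2 * (1 - r ^ 2)))) with hE
  have hE0 : 0 ≤ E := Real.exp_nonneg _
  set C := 1 / (2 * π * Real.sqrt (1 - r ^ 2)) * E with hCdef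
  have hC0 : 0 ≤ C := by
    apply mul_nonneg _ hE0
    positivity
  have hgi : Integrable (fun y : ℝ => Real.exp (-(4⁻¹ : ℝ) * y ^ 2)) :=
    integrable_exp_neg_mul_sq (by norm_num)
  have hg0 : ∀ y : ℝ, 0 ≤ Real.exp (-(4⁻¹ : ℝ) * y ^ 2) := fun y => Real.exp_nonneg _
  have hI : (∫ y : ℝ, Real.exp (-(4⁻¹ : ℝ) * y ^ 2)) = Real.sqrt (4 * π) := by
    rw [integral_gaussian]
    norm_num
    ring
  have hr0 : (0 : ℝ) ≤ r := by linarith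
  -- pointwise bound on the region
  have hpt : ∀ x ∈ Set.Ioi u, ∀ y ∈ Set.Iic (-u'),
      biGaussDensity r x y ≤
        C * Real.exp (-(4⁻¹ : ℝ) * x ^ 2) * Real.exp (-(4⁻¹ : ℝ) * y ^ 2) := by
    intro x hx y hy
    have hx' : u ≤ x := le_of_lt hx
    have hy' : y ≤ -u' := hy
    have hsum : u + u' ≤ x - y := by linarith
    have hsq : (u + u') ^ 2 ≤ (x - y) ^ 2 := pow_le_pow_left₀ hS hsum 2
    have h2t : 0 < 2 * (1 - r ^ 2) := by linarith
    have key : r * (u + u') ^ 2 +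
        (2 * (1 - r ^ 2)) * (4⁻¹ * x ^ 2 + 4⁻¹ * y ^ 2) ≤
          x ^ 2 - 2 * r * x * y + y ^ 2 := by
      have h1 : 0 ≤ r * ((x - y) ^ 2 - (u + u') ^ 2) :=
        mul_nonneg hr0 (by linarith)
      have h2 : 0 ≤ (1 - r) ^ 2 * (x ^ 2 + y ^ 2) :=
        mul_nonneg (sq_nonneg _) (by positivity)
      nlinarith
    have h5 : r * (u + u') ^ 2 / (2 * (1 - r ^ 2)) + (4⁻¹ * x ^ 2 + 4⁻¹ * y ^ 2) ≤
        (x ^ 2 - 2 * r * x * y + y ^ 2) / (2 * (1 - r ^ 2)) := by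
      rw [← sub_nonneg]
      have heq : (x ^ 2 - 2 * r * x * y + y ^ 2) / (2 * (1 - r ^ 2)) -
          (r * (u + u') ^ 2 / (2 * (1 - r ^ 2)) + (4⁻¹ * x ^ 2 + 4⁻¹ * y ^ 2)) =
          ((x ^ 2 - 2 * r * x * y + y ^ 2) -
            (r * (u + u') ^ 2 + (2 * (1 - r ^ 2)) * (4⁻¹ * x ^ 2 + 4⁻¹ * y ^ 2))) /
            (2 * (1 - r ^ 2)) := by
        field_simp
      rw [heq]
      exact div_nonneg (by linarith) (by linarith)
    have hdiv : -(x ^ 2 - 2 * r * x * y + y ^ 2) / (2 * (1 - r ^ 2)) ≤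
        -(r * (u + u') ^ 2 / (2 * (1 - r ^ 2))) +
          (-(4⁻¹ : ℝ) * x ^ 2 + -(4⁻¹ : ℝ) * y ^ 2) := by
      rw [neg_div]
      linarith
    unfold biGaussDensity
    calc 1 / (2 * π * Real.sqrt (1 - r ^ 2)) *
          Real.exp (-(x ^ 2 - 2 * r * x * y + y ^ 2) / (2 * (1 - r ^ 2)))
        ≤ 1 / (2 * π * Real.sqrt (1 - r ^ 2)) *
            Real.exp (-(r * (u + u') ^ 2 / (2 * (1 - r ^ 2))) +
              (-(4⁻¹ : ℝ) * x ^ 2 + -(4⁻¹ : ℝ) * y ^ 2)) := by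
          apply mul_le_mul_of_nonneg_left (Real.exp_le_exp.mpr hdiv)
          positivity
      _ = C * Real.exp (-(4⁻¹ : ℝ) * x ^ 2) * Real.exp (-(4⁻¹ : ℝ) * y ^ 2) := by
          rw [hCdef, hE, Real.exp_add, Real.exp_add]
          ring
  -- inner integral bound
  have hinner : ∀ x ∈ Set.Ioi u,
      (∫ y in Set.Iic (-u'), biGaussDensity r x y) ≤
        C * Real.sqrt (4 * π) * Real.exp (-(4⁻¹ : ℝ) * x ^ 2) := by
    intro x hx
    have hmono : (∫ y in Set.Iic (-u'), biGaussDensity r x y) ≤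
        ∫ y in Set.Iic (-u'),
          (C * Real.exp (-(4⁻¹ : ℝ) * x ^ 2)) * Real.exp (-(4⁻¹ : ℝ) * y ^ 2) := by
      refine integral_mono_of_nonneg (Eventually.of_forall fun y => biGauss_nonneg r x y)
        ((hgi.const_mul _).restrict) ?_
      refine (ae_restrict_iff' measurableSet_Iic).mpr (Eventually.of_forall fun y hy => ?_)
      have h := hpt x hx y hy
      calc biGaussDensity r x y
          ≤ C * Real.exp (-(4⁻¹ : ℝ) * x ^ 2) * Real.exp (-(4⁻¹ : ℝ) * y ^ 2) := h
        _ = (C * Real.exp (-(4⁻¹ : ℝ) * x ^ 2)) * Real.exp (-(4⁻¹ : ℝ) * y ^ 2) := by ring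
    rw [MeasureTheory.integral_const_mul] at hmono
    have hle2 : (∫ y in Set.Iic (-u'), Real.exp (-(4⁻¹ : ℝ) * y ^ 2)) ≤
        ∫ y : ℝ, Real.exp (-(4⁻¹ : ℝ) * y ^ 2) :=
      setIntegral_le_integral hgi (Eventually.of_forall hg0)
    have hCx0 : 0 ≤ C * Real.exp (-(4⁻¹ : ℝ) * x ^ 2) :=
      mul_nonneg hC0 (Real.exp_nonneg _)
    calc (∫ y in Set.Iic (-u'), biGaussDensity r x y)
        ≤ (C * Real.exp (-(4⁻¹ : ℝ) * x ^ 2)) *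
            ∫ y in Set.Iic (-u'), Real.exp (-(4⁻¹ : ℝ) * y ^ 2) := hmono
      _ ≤ (C * Real.exp (-(4⁻¹ : ℝ) * x ^ 2)) *
            ∫ y : ℝ, Real.exp (-(4⁻¹ : ℝ) * y ^ 2) :=
          mul_le_mul_of_nonneg_left hle2 hCx0
      _ = C * Real.sqrt (4 * π) * Real.exp (-(4⁻¹ : ℝ) * x ^ 2) := by
          rw [hI]; ring
  -- outer integral bound
  have hF0 : ∀ x : ℝ, 0 ≤ ∫ y in Set.Iic (-u'), biGaussDensity r x y := fun x =>
    integral_nonneg fun y => biGauss_nonneg r x y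
  have houter : (∫ x in Set.Ioi u, ∫ y in Set.Iic (-u'), biGaussDensity r x y) ≤
      C * Real.sqrt (4 * π) * Real.sqrt (4 * π) := by
    have hmono : (∫ x in Set.Ioi u, ∫ y in Set.Iic (-u'), biGaussDensity r x y) ≤
        ∫ x in Set.Ioi u, (C * Real.sqrt (4 * π)) * Real.exp (-(4⁻¹ : ℝ) * x ^ 2) := by
      refine integral_mono_of_nonneg (Eventually.of_forall fun x => hF0 x)
        ((hgi.const_mul _).restrict) ?_
      refine (ae_restrict_iff' measurableSet_Ioi).mpr (Eventually.of_forall fun x hx => ?_)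
      have h := hinner x hx
      calc (∫ y in Set.Iic (-u'), biGaussDensity r x y)
          ≤ C * Real.sqrt (4 * π) * Real.exp (-(4⁻¹ : ℝ) * x ^ 2) := h
        _ = (C * Real.sqrt (4 * π)) * Real.exp (-(4⁻¹ : ℝ) * x ^ 2) := by ring
    rw [MeasureTheory.integral_const_mul] at hmono
    have hle2 : (∫ x in Set.Ioi u, Real.exp (-(4⁻¹ : ℝ) * x ^ 2)) ≤
        ∫ x : ℝ, Real.exp (-(4⁻¹ : ℝ) * x ^ 2) :=
      setIntegral_le_integral hgi (Eventually.of_forall hg0)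
    have hCs0 : 0 ≤ C * Real.sqrt (4 * π) := mul_nonneg hC0 (Real.sqrt_nonneg _)
    calc (∫ x in Set.Ioi u, ∫ y in Set.Iic (-u'), biGaussDensity r x y)
        ≤ (C * Real.sqrt (4 * π)) * ∫ x in Set.Ioi u, Real.exp (-(4⁻¹ : ℝ) * x ^ 2) := hmono
      _ ≤ (C * Real.sqrt (4 * π)) * ∫ x : ℝ, Real.exp (-(4⁻¹ : ℝ) * x ^ 2) :=
          mul_le_mul_of_nonneg_left hle2 hCs0
      _ = C * Real.sqrt (4 * π) * Real.sqrt (4 * π) := by rw [hI]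
  refine houter.trans_eq ?_
  have h4π : Real.sqrt (4 * π) * Real.sqrt (4 * π) = 4 * π :=
    Real.mul_self_sqrt (by positivity)
  rw [hCdef]
  rw [mul_assoc, h4π]
  field_simp
  ring

lemma useq_ge (n : ℕ) (s : ℝ) (hL : 1 ≤ Real.log n) :
    Real.sqrt (2 * Real.log n) - (Real.sqrt (2 * π) + |s|) ≤ useq n s := by
  unfold useq aseq bseq
  set L := Real.log n with hLdef
  have hL0 : 0 < L := by linarith
  have hQ1 : 1 ≤ Real.sqrt (2 * L) := by
    rw [show (1 : ℝ) = Real.sqrt 1 by simp]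
    exact Real.sqrt_le_sqrt (by linarith)
  have hQ0 : 0 < Real.sqrt (2 * L) := by linarith
  have h1 : -|s| ≤ 1 / Real.sqrt (2 * L) * s := by
    have hs2 : -|s| ≤ s := neg_abs_le s
    have hdiv : -|s| / Real.sqrt (2 * L) ≤ s / Real.sqrt (2 * L) := by gcongr
    have hdiv2 : -|s| ≤ -|s| / Real.sqrt (2 * L) := by
      rw [neg_div]
      have : |s| / Real.sqrt (2 * L) ≤ |s| := div_le_self (abs_nonneg s) hQ1
      linarith
    have : 1 / Real.sqrt (2 * L) * s = s / Real.sqrt (2 * L) := by ring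
    rw [this]
    linarith
  have h2 : Real.log (4 * π * L) / (2 * Real.sqrt (2 * L)) ≤ Real.sqrt (2 * π) := by
    have hpos : 0 < 4 * π * L := by positivity
    have hlog : Real.log (4 * π * L) ≤ 2 * Real.sqrt (4 * π * L) := log_le_two_sqrt hpos
    have hsqrtmul : Real.sqrt (4 * π * L) = Real.sqrt (2 * π) * Real.sqrt (2 * L) := by
      rw [show 4 * π * L = (2 * π) * (2 * L) by ring, Real.sqrt_mul (by positivity)]
    calc Real.log (4 * π * L) / (2 * Real.sqrt (2 * L))
        ≤ 2 * Real.sqrt (4 * π * L) / (2 * Real.sqrt (2 * L)) := by gcongr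
      _ = Real.sqrt (2 * π) := by
          rw [hsqrtmul]
          field_simp
  linarith

theorem stmt_12 (ρ : ℕ → ℝ) (hρ : ∀ n, -1 < ρ n ∧ ρ n < 1)
    (lsq : ℝ) (hlsq : 0 ≤ lsq)
    (hHR : Tendsto (fun n : ℕ => (1 - ρ n) * Real.log n) atTop (nhds lsq))
    (x₁ y₂ : ℝ) :
    Tendsto (fun n : ℕ =>
        (n : ℝ) * ∫ x in Set.Ioi (useq n x₁),
          ∫ y in Set.Iic (-(useq n y₂)), biGaussDensity (ρ n) x y)
      atTop (nhds 0) := by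
  have hLtend : Tendsto (fun n : ℕ => Real.log n) atTop atTop :=
    Real.tendsto_log_atTop.comp tendsto_natCast_atTop_atTop
  set M : ℝ := 2 * Real.sqrt (2 * π) + |x₁| + |y₂| with hM
  have hM0 : 0 ≤ M := by positivity
  -- ρ tends to 1
  have hρ0 : Tendsto (fun n : ℕ => 1 - ρ n) atTop (nhds 0) := by
    have h1 : Tendsto (fun n : ℕ => ((1 - ρ n) * Real.log n) * (Real.log n)⁻¹)
        atTop (nhds (lsq * 0)) :=
      hHR.mul ((hLtend).inv_tendsto_atTop)
    rw [mul_zero] at h1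
    refine (Tendsto.congr' ?_ h1)
    filter_upwards [hLtend.eventually_ge_atTop 1] with n hn
    have hne : Real.log n ≠ 0 := by linarith
    field_simp
  have hρ1 : Tendsto ρ atTop (nhds 1) := by
    have h := hρ0.const_sub (1 : ℝ)
    simpa using h
  -- eventual bound
  have hbound : ∀ᶠ n : ℕ in atTop,
      (n : ℝ) * (∫ x in Set.Ioi (useq n x₁),
          ∫ y in Set.Iic (-(useq n y₂)), biGaussDensity (ρ n) x y)
        ≤ 2 * (n : ℝ) ^ (-(1 / 2 : ℝ)) := by
    filter_upwards [hLtend.eventually_ge_atTop 2,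
      hρ1.eventually (eventually_ge_nhds (by norm_num : (1 : ℝ) / 2 < 1)),
      hLtend.eventually_ge_atTop ((10 * (M + 1)) ^ 2 / 2)] with n hL2 hr12 hQM
    set L := Real.log n with hLdef
    have hn0 : (0 : ℝ) < n := by
      rcases Nat.eq_zero_or_pos n with h | h
      · exfalso; rw [hLdef, h] at hL2; simp at hL2; linarith
      · exact_mod_cast h
    have hQ : 10 * (M + 1) ≤ Real.sqrt (2 * L) :=
      (Real.le_sqrt (by positivity) (by linarith)).mpr (by nlinarith [hQM])
    have hu1 := useq_ge n x₁ (by linarith)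
    have hu2 := useq_ge n y₂ (by linarith)
    set S := useq n x₁ + useq n y₂ with hSdef
    have hQnn : 0 ≤ Real.sqrt (2 * L) := Real.sqrt_nonneg _
    have hS19 : (19 / 10 : ℝ) * Real.sqrt (2 * L) ≤ S := by
      rw [hSdef]
      have : M ≤ Real.sqrt (2 * L) / 10 := by linarith
      rw [hM] at *
      linarith
    have hS0 : 0 ≤ S := le_trans (by positivity) hS19
    have hS6 : 6 * L ≤ S ^ 2 := by
      have h := pow_le_pow_left₀ (by positivity) hS19 2
      have hQsq : Real.sqrt (2 * L) ^ 2 = 2 * L := Real.sq_sqrt (by linarith)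
      have : ((19 / 10 : ℝ) * Real.sqrt (2 * L)) ^ 2 = (361 / 100) * (2 * L) := by
        rw [mul_pow, hQsq]; norm_num
      nlinarith
    set r := ρ n with hrdef
    have hrlt : r < 1 := (hρ n).2
    have ht : 0 < 1 - r ^ 2 := by nlinarith
    have ht1 : 1 - r ^ 2 ≤ 1 := by nlinarith [sq_nonneg r]
    have hIB := integral_bound r (useq n x₁) (useq n y₂) hr12 hrlt hS0
    have hrS : 3 * L ≤ r * S ^ 2 := by nlinarith [sq_nonneg S]
    have hexp1 : Real.exp (-(r * S ^ 2 / (2 * (1 - r ^ 2)))) ≤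
        Real.exp (-((3 * L / 2) / (1 - r ^ 2))) := by
      apply Real.exp_le_exp.mpr
      have : (3 * L / 2) / (1 - r ^ 2) ≤ r * S ^ 2 / (2 * (1 - r ^ 2)) := by
        rw [show r * S ^ 2 / (2 * (1 - r ^ 2)) = (r * S ^ 2 / 2) / (1 - r ^ 2) by rw [div_div]]
        gcongr
      linarith
    have hsup : (Real.sqrt (1 - r ^ 2))⁻¹ * Real.exp (-((3 * L / 2) / (1 - r ^ 2))) ≤
        Real.exp (-(3 * L / 2)) :=
      aux_sup ht ht1 (by linarith)
    have hrpow : Real.exp (-(3 * L / 2)) = (n : ℝ) ^ (-(3 / 2) : ℝ) := by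
      rw [Real.rpow_def_of_pos hn0]
      congr 1
      rw [← hLdef]
      ring
    have hstnn : 0 ≤ (Real.sqrt (1 - r ^ 2))⁻¹ := by positivity
    calc (n : ℝ) * (∫ x in Set.Ioi (useq n x₁),
            ∫ y in Set.Iic (-(useq n y₂)), biGaussDensity r x y)
        ≤ (n : ℝ) * (2 * (Real.sqrt (1 - r ^ 2))⁻¹ *
            Real.exp (-(r * S ^ 2 / (2 * (1 - r ^ 2))))) := by
          apply mul_le_mul_of_nonneg_left _ hn0.le
          simpa [hSdef] using hIB
      _ ≤ (n : ℝ) * (2 * (Real.sqrt (1 - r ^ 2))⁻¹ *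
            Real.exp (-((3 * L / 2) / (1 - r ^ 2)))) := by
          apply mul_le_mul_of_nonneg_left _ hn0.le
          apply mul_le_mul_of_nonneg_left hexp1
          positivity
      _ = 2 * (n : ℝ) * ((Real.sqrt (1 - r ^ 2))⁻¹ *
            Real.exp (-((3 * L / 2) / (1 - r ^ 2)))) := by ring
      _ ≤ 2 * (n : ℝ) * Real.exp (-(3 * L / 2)) := by
          apply mul_le_mul_of_nonneg_left hsup (by positivity)
      _ = 2 * (n : ℝ) ^ (-(1 / 2 : ℝ)) := by
          rw [hrpow]
          have hnn : (n : ℝ) * (n : ℝ) ^ (-(3 / 2) : ℝ) = (n : ℝ) ^ (-(1 / 2) : ℝ) := by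
            nth_rewrite 1 [← Real.rpow_one (n : ℝ)]
            rw [← Real.rpow_add hn0]
            norm_num
          rw [mul_assoc, hnn]
  have hnonneg : ∀ᶠ n : ℕ in atTop,
      0 ≤ (n : ℝ) * (∫ x in Set.Ioi (useq n x₁),
          ∫ y in Set.Iic (-(useq n y₂)), biGaussDensity (ρ n) x y) :=
    Eventually.of_forall fun n =>
      mul_nonneg (Nat.cast_nonneg n)
        (integral_nonneg fun x => integral_nonneg fun y => biGauss_nonneg _ _ _)
  have hlim : Tendsto (fun n : ℕ => 2 * (n : ℝ) ^ (-(1 / 2 : ℝ))) atTop (nhds 0) := by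
    have h := (tendsto_rpow_neg_atTop (by norm_num : (0 : ℝ) < 1 / 2)).comp
      (tendsto_natCast_atTop_atTop (R := ℝ))
    have h2 := h.const_mul (2 : ℝ)
    rw [mul_zero] at h2
    exact h2.congr fun n => rfl
  exact tendsto_of_tendsto_of_tendsto_of_le_of_le' tendsto_const_nhds hlim hnonneg hbound
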